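/- arXiv:1012.3439 — 5 statements merged into one kernel-verified Lean document; each statement's English description precedes it below -/
import Mathlib

section
/- Let q be a prime power, m ≥ 2 and n ≤ q^m be integers, and let L = (α_1, …, α_n) be an n-tuple of distinct elements of F_{q^m}. Let G ∈ F_{q^m}[X] be a square-free polynomial which does not vanish at any element of L and which satisfies 0 < deg(G) < n/q. Then Γ_q(L, G^{q−1}) = Γ_q(L, G^q). -/
open Polynomial

/-- The q-ary classical Goppa code `Γ_q(L,G)`: the set of words `c ∈ F_q^n` such that
`G(X)` divides `Σ_i c_i ∏_{j≠i} (X - α_j)` (equivalently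
`Σ_i c_i/(X-α_i) ≡ 0 mod G(X)`), where `F_q` is embedded in `F_{q^m}` via an algebra map. -/
def goppaCode (Fq K : Type*) [Field Fq] [Field K] [Algebra Fq K] {n : ℕ}
    (α : Fin n → K) (G : K[X]) : Set (Fin n → Fq) :=
  { c | G ∣ ∑ i, Polynomial.C (algebraMap Fq K (c i)) *
        ∏ j ∈ Finset.univ.erase i, (Polynomial.X - Polynomial.C (α j)) }

section Aux

variable {K : Type*} [Field K]

/-- `π` divides every Hasse derivative of order `< e` of `π ^ e`. -/
lemma aux_dvd_hasse (π : K[X]) : ∀ e : ℕ, ∀ k < e, π ∣ hasseDeriv k (π ^ e) := by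
  intro e
  induction e with
  | zero => intro k hk; exact absurd hk (Nat.not_lt_zero k)
  | succ e ih =>
    intro k hk
    rw [pow_succ, hasseDeriv_mul]
    refine Finset.dvd_sum ?_
    rintro ⟨a, b⟩ hab
    rw [Finset.HasAntidiagonal.mem_antidiagonal] at hab
    by_cases ha : a < e
    · exact Dvd.dvd.mul_right (ih a ha) _
    · have hb : b = 0 := by omega
      subst hb
      rw [hasseDeriv_zero']
      exact dvd_mul_left π _

/-- `hasseDeriv e (π ^ e) ≡ (π') ^ e  [MOD π]`. -/
lemma aux_hasse_sub (π : K[X]) : ∀ e : ℕ, π ∣ hasseDeriv e (π ^ e) - (derivative π) ^ e := by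
  intro e
  induction e with
  | zero => simp
  | succ e ih =>
    rw [pow_succ, hasseDeriv_mul,
      ← Finset.add_sum_erase _ _ (show ((e, 1) : ℕ × ℕ) ∈ Finset.HasAntidiagonal.antidiagonal (e + 1) by simp)]
    have h1 : π ∣ hasseDeriv e (π ^ e) * hasseDeriv 1 π - derivative π ^ (e + 1) := by
      rw [hasseDeriv_one', pow_succ]
      have h2 := ih.mul_right (derivative π)
      rwa [sub_mul] at h2
    have h2 : π ∣ ∑ x ∈ (Finset.HasAntidiagonal.antidiagonal (e + 1)).erase (e, 1),
        hasseDeriv x.1 (π ^ e) * hasseDeriv x.2 π := by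
      refine Finset.dvd_sum ?_
      rintro ⟨a, b⟩ hab
      rw [Finset.mem_erase, Finset.HasAntidiagonal.mem_antidiagonal] at hab
      obtain ⟨hne, hab⟩ := hab
      by_cases ha : a < e
      · exact Dvd.dvd.mul_right (aux_dvd_hasse π e a ha) _
      · have hb : (a = e ∧ b = 1) ∨ b = 0 := by omega
        rcases hb with ⟨rfl, rfl⟩ | rfl
        · exact absurd rfl hne
        · rw [hasseDeriv_zero']
          exact dvd_mul_left π _
    obtain ⟨u, hu⟩ := h1
    obtain ⟨v, hv⟩ := h2
    exact ⟨u + v, by rw [mul_add, ← hu, ← hv]; ring⟩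

variable (p s : ℕ) [hp : Fact p.Prime] [CharP K p]

/-- Lucas-type vanishing: `C(N, j) = 0` in characteristic `p` when `p^s ∣ N`, `p^s ∤ j`. -/
lemma aux_choose_cast {N j : ℕ} (hN : p ^ s ∣ N) (hj : ¬ p ^ s ∣ j) :
    ((N.choose j : K)) = 0 := by
  obtain ⟨t, rfl⟩ := hN
  have h1 : ((1 : K[X]) + X) ^ (p ^ s * t) = expand K (p ^ s) ((1 + X) ^ t) := by
    rw [map_pow, map_add, map_one, expand_X, pow_mul, add_pow_char_pow, one_pow]
  have h2 := coeff_one_add_X_pow K (p ^ s * t) j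
  rw [h1, coeff_expand (pow_pos hp.out.pos s), if_neg hj] at h2
  exact h2.symm

/-- Coefficients of a `p^s`-th power are supported on multiples of `p^s`. -/
lemma aux_coeff_qpow (w : K[X]) {j : ℕ} (hj : ¬ p ^ s ∣ j) : (w ^ p ^ s).coeff j = 0 := by
  rw [← map_iterateFrobenius_expand p, coeff_map, coeff_expand (pow_pos hp.out.pos s),
    if_neg hj, map_zero]

/-- Hasse derivatives of order strictly between `0` and `p^s` kill `p^s`-th powers. -/
lemma aux_hasse_qpow (w : K[X]) {k : ℕ} (hk0 : 0 < k) (hk : k < p ^ s) :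
    hasseDeriv k (w ^ p ^ s) = 0 := by
  ext n
  rw [hasseDeriv_coeff, coeff_zero]
  by_cases hd : p ^ s ∣ n + k
  · rw [aux_choose_cast p s hd (Nat.not_dvd_of_pos_of_lt hk0 hk), zero_mul]
  · rw [aux_coeff_qpow p s w hd, mul_zero]

/-- The top Hasse derivative of `(X - a)^e` is `1`. -/
lemma aux_hasse_top (e : ℕ) (a : K) : hasseDeriv e ((X - C a) ^ e) = 1 := by
  have hm : ((X - C a) ^ e).natDegree = e := by
    rw [natDegree_pow, natDegree_X_sub_C, mul_one]
  ext n
  rw [hasseDeriv_coeff, coeff_one]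
  rcases Nat.eq_zero_or_pos n with rfl | hn
  · have h1 : ((X - C a) ^ e).coeff e = 1 := by
      have h2 := Monic.coeff_natDegree ((monic_X_sub_C a).pow e)
      rwa [hm] at h2
    simp [h1]
  · rw [coeff_eq_zero_of_natDegree_lt (by rw [hm]; omega), mul_zero, if_neg hn.ne']

/-- The key identity: the `(q-1)`-st Hasse derivative of `A·h^(q-1)` equals `A^q`,
where `A = Σ c_i ∏_{j≠i}(X - α_j)` and `h = ∏_j (X - α_j)`, `q = p^s = |F_q|`. -/
lemma goppa_key {Fq : Type*} [Field Fq] [Fintype Fq] [Algebra Fq K]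
    (hcard : Fintype.card Fq = p ^ s)
    {n : ℕ} (α : Fin n → K) (c : Fin n → Fq) :
    hasseDeriv (p ^ s - 1)
      ((∑ i, C (algebraMap Fq K (c i)) * ∏ j ∈ Finset.univ.erase i, (X - C (α j))) *
        (∏ j, (X - C (α j))) ^ (p ^ s - 1)) =
      (∑ i, C (algebraMap Fq K (c i)) * ∏ j ∈ Finset.univ.erase i, (X - C (α j))) ^ p ^ s := by
  have hqpos : 0 < p ^ s := pow_pos hp.out.pos s
  obtain ⟨e, he⟩ : ∃ e, p ^ s = e + 1 := ⟨p ^ s - 1, by omega⟩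
  have he1 : p ^ s - 1 = e := by omega
  rw [he1]
  have step1 : (∑ i, C (algebraMap Fq K (c i)) * ∏ j ∈ Finset.univ.erase i, (X - C (α j))) *
      (∏ j, (X - C (α j))) ^ e
      = ∑ i : Fin n, C (algebraMap Fq K (c i)) *
          ((∏ j ∈ Finset.univ.erase i, (X - C (α j))) ^ (e + 1) * (X - C (α i)) ^ e) := by
    rw [Finset.sum_mul]
    refine Finset.sum_congr rfl fun i _ => ?_
    rw [← Finset.mul_prod_erase Finset.univ _ (Finset.mem_univ i), mul_pow, pow_succ]
    ring
  have step2 : ∀ i : Fin n, hasseDeriv e (C (algebraMap Fq K (c i)) *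
      ((∏ j ∈ Finset.univ.erase i, (X - C (α j))) ^ (e + 1) * (X - C (α i)) ^ e))
      = C (algebraMap Fq K (c i)) *
          (∏ j ∈ Finset.univ.erase i, (X - C (α j))) ^ (e + 1) := by
    intro i
    rw [← smul_eq_C_mul, map_smul, smul_eq_C_mul, hasseDeriv_mul]
    congr 1
    have hzero : ∀ b ∈ Finset.HasAntidiagonal.antidiagonal e, b ≠ ((0 : ℕ), e) →
        hasseDeriv b.1 ((∏ j ∈ Finset.univ.erase i, (X - C (α j))) ^ (e + 1)) *
          hasseDeriv b.2 ((X - C (α i)) ^ e) = 0 := by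
      rintro ⟨a, b⟩ hab hne
      rw [Finset.HasAntidiagonal.mem_antidiagonal] at hab
      have ha : 0 < a := by
        rcases Nat.eq_zero_or_pos a with rfl | h
        · exact absurd (by simp [← hab]) hne
        · exact h
      have h0 : hasseDeriv a ((∏ j ∈ Finset.univ.erase i, (X - C (α j))) ^ (e + 1)) = 0 := by
        rw [← he]
        exact aux_hasse_qpow p s _ ha (by omega)
      rw [h0, zero_mul]
    rw [Finset.sum_eq_single_of_mem ((0 : ℕ), e) (by simp) hzero, hasseDeriv_zero',
      aux_hasse_top, mul_one]
  have step3 : (∑ i, C (algebraMap Fq K (c i)) *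
        ∏ j ∈ Finset.univ.erase i, (X - C (α j))) ^ p ^ s
      = ∑ i : Fin n, C (algebraMap Fq K (c i)) *
          (∏ j ∈ Finset.univ.erase i, (X - C (α j))) ^ (e + 1) := by
    rw [sum_pow_char_pow]
    refine Finset.sum_congr rfl fun i _ => ?_
    have hc : (c i) ^ p ^ s = c i := by
      rw [← hcard]; exact FiniteField.pow_card (c i)
    rw [mul_pow, ← C_pow, ← map_pow, hc, he]
  rw [step1, map_sum, step3]
  exact Finset.sum_congr rfl fun i _ => step2 i

end Aux

/-- Theorem (Bernstein–Lange–Peters / Theorem `Egalite_generalisee`):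
if `G` is square-free, does not vanish on `L`, and `0 < deg G < n/q`, then
`Γ_q(L, G^(q-1)) = Γ_q(L, G^q)`. -/
theorem goppa_squarefree_pow_eq
    (q m n : ℕ) (hq : IsPrimePow q) (hm : 2 ≤ m)
    (Fq K : Type*) [Field Fq] [Fintype Fq] [Field K] [Fintype K] [Algebra Fq K]
    (hcardq : Fintype.card Fq = q) (hcardK : Fintype.card K = q ^ m)
    (hn : n ≤ q ^ m)
    (α : Fin n → K) (hα : Function.Injective α)
    (G : K[X]) (hsf : Squarefree G)
    (hGα : ∀ i, G.eval (α i) ≠ 0)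
    (hdeg : 0 < G.natDegree) (hdegn : q * G.natDegree < n) :
    goppaCode Fq K α (G ^ (q - 1)) = goppaCode Fq K α (G ^ q) := by
  classical
  -- characteristic setup
  set p := ringChar Fq with hpdef
  haveI : CharP Fq p := ringChar.charP Fq
  obtain ⟨s, hpp, hcard⟩ := FiniteField.card Fq p
  haveI : Fact p.Prime := ⟨hpp⟩
  haveI : CharP K p := charP_of_injective_algebraMap (algebraMap Fq K).injective p
  have hqps : q = p ^ (s : ℕ) := by rw [← hcardq, hcard]
  subst hqps
  have hqpos : 0 < p ^ (s : ℕ) := pow_pos hpp.pos _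
  have hq2 : 2 ≤ p ^ (s : ℕ) := le_trans hpp.two_le (Nat.le_self_pow s.pos.ne' p)
  have hq1 : p ^ (s : ℕ) - 1 + 1 = p ^ (s : ℕ) := by omega
  ext c
  simp only [goppaCode, Set.mem_setOf_eq]
  have hid := goppa_key p (s : ℕ) hcard α c
  set A := ∑ i, C (algebraMap Fq K (c i)) *
      ∏ j ∈ Finset.univ.erase i, (X - C (α j)) with hA
  set h := ∏ j : Fin n, (X - C (α j)) with hh
  constructor
  · -- hard direction
    intro hGA
    have key : ∀ π : K[X], Prime π → π ∣ G → π ^ (p ^ (s : ℕ)) ∣ A := by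
      intro π hπ hπG
      by_contra hnot
      -- π does not divide h
      have hπh : ¬ π ∣ h := by
        intro hd
        obtain ⟨i, -, hi⟩ := hπ.exists_mem_finset_dvd hd
        have hXd : (X - C (α i)) ∣ π := by
          obtain ⟨u, hu⟩ := hi
          rcases (irreducible_X_sub_C (α i)).isUnit_or_isUnit hu with h' | h'
          · exact absurd h' hπ.not_unit
          · obtain ⟨v, rfl⟩ := h'
            exact ⟨(v⁻¹ : K[X]ˣ), by rw [hu, mul_assoc, Units.mul_inv, mul_one]⟩
        exact hGα i (dvd_iff_isRoot.mp (hXd.trans hπG))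
      -- π^(q-1) exactly divides A, write A = π^(q-1) U with π ∤ U
      have hA1 : π ^ (p ^ (s : ℕ) - 1) ∣ A := (pow_dvd_pow_of_dvd hπG _).trans hGA
      obtain ⟨U, hU⟩ := hA1
      have hπU : ¬ π ∣ U := by
        rintro ⟨w, hw⟩
        exact hnot ⟨w, by rw [hU, hw, ← mul_assoc, ← pow_succ, hq1]⟩
      set V := U * h ^ (p ^ (s : ℕ) - 1) with hV
      have hAV : A * h ^ (p ^ (s : ℕ) - 1) = π ^ (p ^ (s : ℕ) - 1) * V := by
        rw [hU, hV]; ring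
      have hπV : ¬ π ∣ V := by
        intro hd
        rcases hπ.dvd_or_dvd hd with h1 | h1
        · exact hπU h1
        · exact hπh (hπ.dvd_of_dvd_pow h1)
      have hπA : π ∣ A := by
        rw [hU]
        exact (dvd_pow_self π (by omega : p ^ (s : ℕ) - 1 ≠ 0)).mul_right U
      have hdvdAq : π ∣ A ^ p ^ (s : ℕ) := dvd_pow hπA (by omega)
      rw [← hid, hAV, hasseDeriv_mul,
        ← Finset.add_sum_erase _ _ (show ((p ^ (s : ℕ) - 1, 0) : ℕ × ℕ) ∈
          Finset.HasAntidiagonal.antidiagonal (p ^ (s : ℕ) - 1) by simp)] at hdvdAq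
      have hrest : π ∣ ∑ ij ∈ (Finset.HasAntidiagonal.antidiagonal (p ^ (s : ℕ) - 1)).erase
          (p ^ (s : ℕ) - 1, 0),
          hasseDeriv ij.1 (π ^ (p ^ (s : ℕ) - 1)) * hasseDeriv ij.2 V := by
        refine Finset.dvd_sum ?_
        rintro ⟨a, b⟩ hab
        rw [Finset.mem_erase, Finset.HasAntidiagonal.mem_antidiagonal] at hab
        have ha : a < p ^ (s : ℕ) - 1 := by
          rcases Nat.lt_or_ge a (p ^ (s : ℕ) - 1) with h' | h'
          · exact h'
          · exfalso
            have hb : a = p ^ (s : ℕ) - 1 ∧ b = 0 := by omega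
            obtain ⟨rfl, rfl⟩ := hb
            exact hab.1 rfl
        exact Dvd.dvd.mul_right (aux_dvd_hasse π _ a ha) _
      have hterm : π ∣ hasseDeriv (p ^ (s : ℕ) - 1) (π ^ (p ^ (s : ℕ) - 1)) *
          hasseDeriv 0 V := by
        have h3 := dvd_sub hdvdAq hrest
        rwa [add_sub_cancel_right] at h3
      rw [hasseDeriv_zero'] at hterm
      have hfinal : π ∣ derivative π ^ (p ^ (s : ℕ) - 1) * V := by
        have h2 := (aux_hasse_sub π (p ^ (s : ℕ) - 1)).mul_right V
        rw [sub_mul] at h2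
        have h3 := dvd_sub hterm h2
        rwa [sub_sub_cancel] at h3
      rcases hπ.dvd_or_dvd hfinal with h1 | h1
      · have hd : π ∣ derivative π := hπ.dvd_of_dvd_pow h1
        have hsep : π.Separable := PerfectField.separable_of_irreducible hπ.irreducible
        exact hπ.not_unit (hsep.isUnit_of_dvd' dvd_rfl hd)
      · exact hπV h1
    -- conclude by squarefree factorization
    have final : ∀ d : K[X], Squarefree d → d ∣ G → d ^ (p ^ (s : ℕ)) ∣ A := by
      intro d
      refine UniqueFactorizationMonoid.induction_on_coprime
        (P := fun d : K[X] => Squarefree d → d ∣ G → d ^ (p ^ (s : ℕ)) ∣ A) d ?_ ?_ ?_ ?_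
      · intro h' _
        exact absurd h' not_squarefree_zero
      · intro x hx _ _
        exact (hx.pow _).dvd
      · intro π i hπ hsq hdvd
        rcases i with _ | _ | k
        · simpa using one_dvd A
        · rw [pow_one] at hsq hdvd ⊢
          exact key π hπ hdvd
        · exact absurd (hsq π ⟨π ^ k, by ring⟩) hπ.not_unit
      · intro x y hxy hx hy hsq hdvd
        have hxg := hx hsq.of_mul_left ((dvd_mul_right x y).trans hdvd)
        have hyg := hy hsq.of_mul_right ((dvd_mul_left y x).trans hdvd)
        rw [mul_pow]
        exact (hxy.isCoprime.pow).mul_dvd hxg hyg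
    exact final G hsf dvd_rfl
  · intro hGA
    exact dvd_trans (pow_dvd_pow G (Nat.sub_le _ 1)) hGA
end

section
/- Let q be a prime power, m ≥ 2 and n ≤ q^m be integers, L = (α_1, …, α_n) an n-tuple of distinct elements of F_{q^m}, r an integer with 0 < r < n, and G ∈ F_{q^m}[X] a polynomial of degree r which does not vanish at any element of L. Define β_i := G(α_i) / ∏_{j≠i}(α_i − α_j) for 1 ≤ i ≤ n. Then the classical Goppa code Γ_q(L,G) equals the subfield subcode GRS_{q^m}(L, B, n−r) ∩ F_q^n, where B = (β_1, …, β_n). -/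
open Polynomial

/-- Proposition `GoppaGRS`: the classical Goppa code `Γ_q(L,G)` is the subfield subcode
`GRS_{q^m}(L, B, n-r) ∩ F_q^n`, where `β_i = G(α_i) / ∏_{j≠i}(α_i - α_j)`:
a word `c ∈ F_q^n` lies in `Γ_q(L,G)` iff its embedding into `F_{q^m}^n` is of the form
`(β_1 f(α_1), …, β_n f(α_n))` for some polynomial `f` of degree `< n - r`. -/
theorem goppa_eq_subfield_subcode_GRS
    (q m n r : ℕ) (hq : IsPrimePow q) (hm : 2 ≤ m)
    (Fq K : Type*) [Field Fq] [Fintype Fq] [Field K] [Fintype K] [Algebra Fq K]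
    (hcardq : Fintype.card Fq = q) (hcardK : Fintype.card K = q ^ m)
    (hn : n ≤ q ^ m)
    (α : Fin n → K) (hα : Function.Injective α)
    (hr0 : 0 < r) (hrn : r < n)
    (G : K[X]) (hGdeg : G.natDegree = r)
    (hGα : ∀ i, G.eval (α i) ≠ 0)
    (β : Fin n → K)
    (hβ : ∀ i, β i = G.eval (α i) / ∏ j ∈ Finset.univ.erase i, (α i - α j)) :
    goppaCode Fq K α G =
      { c : Fin n → Fq | ∃ f : K[X], f.degree < (n - r : ℕ) ∧
        ∀ i, algebraMap Fq K (c i) = β i * f.eval (α i) } := by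
  classical
  have hGne : G ≠ 0 := by
    intro h
    rw [h, natDegree_zero] at hGdeg
    omega
  set S : (Fin n → Fq) → K[X] := fun c => ∑ i, C (algebraMap Fq K (c i)) *
      ∏ j ∈ Finset.univ.erase i, (X - C (α j)) with hS
  have hPi : ∀ i : Fin n, (∏ j ∈ Finset.univ.erase i, (α i - α j)) ≠ 0 := by
    intro i
    rw [Finset.prod_ne_zero_iff]
    intro j hj
    exact sub_ne_zero.mpr fun h => (Finset.mem_erase.mp hj).1 (hα h.symm)
  have heval : ∀ (c : Fin n → Fq) (i : Fin n),
      (S c).eval (α i) = algebraMap Fq K (c i) * ∏ j ∈ Finset.univ.erase i, (α i - α j) := by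
    intro c i
    rw [hS]
    simp only [eval_finset_sum, eval_mul, eval_prod, eval_sub, eval_X, eval_C]
    rw [Finset.sum_eq_single i]
    · intro k _ hk
      rw [Finset.prod_eq_zero (Finset.mem_erase.mpr ⟨hk.symm, Finset.mem_univ i⟩)
        (sub_self (α i)), mul_zero]
    · intro h
      exact absurd (Finset.mem_univ i) h
  have hdegS : ∀ c, (S c).degree < (n : ℕ) := by
    intro c
    refine lt_of_le_of_lt (degree_sum_le _ _) ?_
    rw [Finset.sup_lt_iff (by exact_mod_cast WithBot.bot_lt_coe n)]
    intro i _
    refine lt_of_le_of_lt ((degree_mul_le _ _).trans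
      (le_trans (add_le_add degree_C_le le_rfl) (by rw [zero_add]))) ?_
    rw [degree_prod]
    simp only [degree_X_sub_C]
    rw [Finset.sum_const, Finset.card_erase_of_mem (Finset.mem_univ i), Finset.card_univ,
      Fintype.card_fin, nsmul_eq_mul, mul_one]
    exact_mod_cast Nat.sub_lt (by omega) one_pos
  have hbP : ∀ i, β i * (∏ j ∈ Finset.univ.erase i, (α i - α j)) = G.eval (α i) := by
    intro i
    rw [hβ i, div_mul_cancel₀ _ (hPi i)]
  ext c
  constructor
  · rintro ⟨f, hf0'⟩
    have hf : S c = G * f := hf0'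
    have hdf : f.degree < ((n - r : ℕ) : WithBot ℕ) := by
      by_cases hf0 : f = 0
      · rw [hf0, degree_zero]
        exact_mod_cast WithBot.bot_lt_coe _
      · have hSne : S c ≠ 0 := by rw [hf]; exact mul_ne_zero hGne hf0
        have h1 : (S c).natDegree < n := (natDegree_lt_iff_degree_lt hSne).mpr (hdegS c)
        rw [hf, natDegree_mul hGne hf0, hGdeg] at h1
        exact (natDegree_lt_iff_degree_lt hf0).mp (by omega)
    refine ⟨f, hdf, fun i => ?_⟩
    have h1 := heval c i
    rw [hf, eval_mul] at h1
    apply mul_right_cancel₀ (hPi i)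
    rw [← h1, ← hbP i]
    ring
  · rintro ⟨f, hfdeg, hfc⟩
    have key : S c = G * f := by
      have hevalz : ∀ i, (S c - G * f).eval (α i) = 0 := by
        intro i
        rw [eval_sub, eval_mul, heval c i, hfc i, sub_eq_zero, mul_right_comm, hbP i]
      have hdeg : (S c - G * f).degree < (n : ℕ) := by
        refine lt_of_le_of_lt (degree_sub_le _ _) (max_lt (hdegS c) ?_)
        by_cases hf0 : f = 0
        · rw [hf0, mul_zero, degree_zero]
          exact_mod_cast WithBot.bot_lt_coe n
        · rw [degree_mul, degree_eq_natDegree hGne, degree_eq_natDegree hf0, hGdeg]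
          have : f.natDegree < n - r := by
            have := (natDegree_lt_iff_degree_lt hf0).mpr hfdeg
            omega
          exact_mod_cast (by omega : r + f.natDegree < n)
      have hD : S c - G * f = 0 := by
        by_cases hD0 : S c - G * f = 0
        · exact hD0
        · refine eq_zero_of_natDegree_lt_card_of_eval_eq_zero _ hα hevalz ?_
          rw [Fintype.card_fin]
          exact (natDegree_lt_iff_degree_lt hD0).mpr hdeg
      linear_combination hD
    exact ⟨f, key⟩
end

section
/- Let F be a field, let Q(X,Y) ∈ F[X,Y] be a bivariate polynomial having multiplicity at least s at a point (a,b) ∈ F², and let f(X) ∈ F[X] be a univariate polynomial with f(a) = b. Then (X − a)^s divides Q(X, f(X)). -/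
open Polynomial

/-- The shifted bivariate polynomial `Q(X+a, Y+b)`, where a bivariate polynomial over `F`
is represented as an element of `F[X][Y]` (outer variable `Y`, inner variable `X`). -/
noncomputable def shiftXY {F : Type*} [CommRing F] (Q : Polynomial (Polynomial F))
    (a b : F) : Polynomial (Polynomial F) :=
  (Q.comp (Polynomial.X + Polynomial.C (Polynomial.C b))).map
    (Polynomial.aeval (Polynomial.X + Polynomial.C a) :
      Polynomial F →ₐ[F] Polynomial F).toRingHom

/-- `Q(X,Y)` has multiplicity at least `s` at the point `(a,b)`: all coefficients of
`Q(X+a, Y+b)` of total degree `< s` vanish. -/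
def HasMultAtLeast {F : Type*} [CommRing F] (Q : Polynomial (Polynomial F))
    (a b : F) (s : ℕ) : Prop :=
  ∀ i j : ℕ, i + j < s → ((shiftXY Q a b).coeff j).coeff i = 0

lemma shiftXY_comp_eval {F : Type*} [CommRing F] (Q : Polynomial (Polynomial F))
    (a b : F) (f : Polynomial F) :
    (shiftXY Q a b).eval (f.comp (Polynomial.X + Polynomial.C a) - Polynomial.C b)
      = (Q.eval f).comp (Polynomial.X + Polynomial.C a) := by
  induction Q using Polynomial.induction_on' with
  | add p q hp hq =>
    simp only [shiftXY, add_comp, Polynomial.map_add, eval_add, hp, hq] at *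
  | monomial n c =>
    simp only [shiftXY, monomial_comp, Polynomial.map_mul, Polynomial.map_pow,
      Polynomial.map_add, map_C, map_X, eval_mul, eval_pow, eval_add, eval_C, eval_X,
      eval_monomial, mul_comp, pow_comp, AlgHom.toRingHom_eq_coe, AlgHom.coe_toRingHom,
      aeval_C, comp_eq_aeval]
    ring_nf
    simp [comp_eq_aeval]

/-- Lemma `Lem:Mult` (Guruswami–Sudan): if `Q(X,Y)` has multiplicity at least `s` at
`(a,b)` and `f(a) = b`, then `(X - a)^s` divides `Q(X, f(X))`. -/
theorem mult_at_point_divides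
    {F : Type*} [Field F] (Q : Polynomial (Polynomial F)) (a b : F) (s : ℕ)
    (hQ : HasMultAtLeast Q a b s) (f : Polynomial F) (hf : f.eval a = b) :
    (Polynomial.X - Polynomial.C a) ^ s ∣ Q.eval f := by
  set g : Polynomial F := f.comp (Polynomial.X + Polynomial.C a) - Polynomial.C b with hg
  have hgX : (Polynomial.X : Polynomial F) ∣ g := by
    rw [Polynomial.X_dvd_iff, Polynomial.coeff_zero_eq_eval_zero]
    simp [hg, hf]
  have hdvd : (Polynomial.X : Polynomial F) ^ s ∣ (shiftXY Q a b).eval g := by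
    rw [Polynomial.eval_eq_sum, Polynomial.sum]
    apply Finset.dvd_sum
    intro e _
    have h1 : (Polynomial.X : Polynomial F) ^ (s - e) ∣ (shiftXY Q a b).coeff e := by
      rw [Polynomial.X_pow_dvd_iff]
      intro i hi
      exact hQ i e (by omega)
    have h2 : (Polynomial.X : Polynomial F) ^ e ∣ g ^ e := pow_dvd_pow_of_dvd hgX e
    calc (Polynomial.X : Polynomial F) ^ s ∣ Polynomial.X ^ (s - e + e) :=
          pow_dvd_pow _ (by omega)
      _ = Polynomial.X ^ (s - e) * Polynomial.X ^ e := pow_add _ _ _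
      _ ∣ (shiftXY Q a b).coeff e * g ^ e := mul_dvd_mul h1 h2
  rw [shiftXY_comp_eval] at hdvd
  have := map_dvd (Polynomial.aeval (Polynomial.X - Polynomial.C a) :
    Polynomial F →ₐ[F] Polynomial F) hdvd
  simpa [map_pow, ← comp_eq_aeval, Polynomial.comp_assoc] using this
end

section
/- Let q be a prime power, m ≥ 2, let L = (α_1,…,α_n) be distinct elements of F_{q^m}, B = (β_1,…,β_n) nonzero elements of F_{q^m}, and let k be an integer with 1 < k ≤ n. Set δ := (n−k+1)/n and τ := ((q−1)/q)·(1 − √(1 − qδ/(q−1))). Then for every real γ with 0 ≤ γ < τ there exists an integer s₀ such that for all integers s ≥ s₀ and for every received word y ∈ F_q^n, there exists a nonzero polynomial Q(X,Y) ∈ F_{q^m}[X,Y] satisfying: (i) for every i, Q has multiplicity at least ⌈s(1−γ)⌉ at (α_i, y_i β_i^{−1}); (ii) for every i and every z ∈ F_q \ {y_i}, Q has multiplicity at least ⌈sγ/(q−1)⌉ at (α_i, z β_i^{−1}); (iii) wdeg_{1,k−1} Q(X,Y) < s·n·((1−γ)² + γ²/(q−1)). -/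
open Polynomial Finset

lemma shiftXY_add {F : Type*} [CommRing F] (P Q : Polynomial (Polynomial F)) (a b : F) :
    shiftXY (P + Q) a b = shiftXY P a b + shiftXY Q a b := by
  unfold shiftXY; rw [Polynomial.add_comp, Polynomial.map_add]

lemma shiftXY_C_mul {F : Type*} [CommRing F] (r : F) (Q : Polynomial (Polynomial F)) (a b : F) :
    shiftXY (Polynomial.C (Polynomial.C r) * Q) a b
      = Polynomial.C (Polynomial.C r) * shiftXY Q a b := by
  unfold shiftXY
  rw [Polynomial.mul_comp, Polynomial.C_comp, Polynomial.map_mul, Polynomial.map_C]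
  simp [Polynomial.aeval_C, Polynomial.algebraMap_eq]

/-- count of {(u,v) : u,v < r, u+v < r} is at most r(r+1)/2 -/
lemma tri_card_le (r : ℕ) :
    (((range r) ×ˢ (range r)).filter (fun p : ℕ × ℕ => p.1 + p.2 < r)).card * 2 ≤ r * (r + 1) := by
  have h := Finset.card_eq_sum_card_fiberwise
    (f := fun p : ℕ × ℕ => p.1 + p.2)
    (s := ((range r) ×ˢ (range r)).filter (fun p : ℕ × ℕ => p.1 + p.2 < r))
    (t := range r) (by intro p hp; simp only [Finset.mem_coe, mem_filter] at hp; simpa using hp.2)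
  rw [h]
  have hfib : ∀ t ∈ range r,
      ((((range r) ×ˢ (range r)).filter (fun p : ℕ × ℕ => p.1 + p.2 < r)).filter
        (fun p => p.1 + p.2 = t)).card ≤ t + 1 := by
    intro t _
    have hsub : (((range r) ×ˢ (range r)).filter (fun p : ℕ × ℕ => p.1 + p.2 < r)).filter
        (fun p => p.1 + p.2 = t) ⊆ Finset.HasAntidiagonal.antidiagonal t := by
      intro p hp
      simp only [mem_filter] at hp
      simpa [Finset.HasAntidiagonal.mem_antidiagonal] using hp.2
    calc _ ≤ (Finset.HasAntidiagonal.antidiagonal t).card := Finset.card_le_card hsub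
      _ = t + 1 := Finset.Nat.card_antidiagonal t
  have h2 : (∑ t ∈ range r, (t+1)) * 2 ≤ r * (r+1) := by
    have : (∑ t ∈ range r, (t+1)) = (∑ t ∈ range r, t) + r := by
      rw [Finset.sum_add_distrib, Finset.sum_const, Finset.card_range, smul_eq_mul, mul_one]
    rw [this, add_mul, Finset.sum_range_id_mul_two, ← Nat.mul_add]
    rcases Nat.eq_zero_or_pos r with h0 | h1
    · simp [h0]
    · exact Nat.mul_le_mul_left r (by omega)
  calc (∑ t ∈ range r, _) * 2 ≤ (∑ t ∈ range r, (t+1)) * 2 :=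
        Nat.mul_le_mul_right 2 (Finset.sum_le_sum hfib)
    _ ≤ r * (r + 1) := h2

/-- lower bound for the number of monomials of weighted degree < D -/
lemma mon_card_ge (e D : ℕ) (he : 1 ≤ e) :
    D * (D + 1) ≤
      2 * e * (((range D) ×ˢ (range D)).filter (fun p : ℕ × ℕ => p.1 + e * p.2 < D)).card := by
  rcases Nat.eq_zero_or_pos D with hD0 | hD1
  · simp [hD0]
  set J := (D - 1) / e with hJ
  have hmod : (D - 1) % e < e := Nat.mod_lt _ he
  have hdm : e * J + (D - 1) % e = D - 1 := Nat.div_add_mod (D - 1) e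
  have heJ : e * J ≤ D - 1 := by omega
  have heJ1 : D ≤ e * (J + 1) := by
    have : e * (J + 1) = e * J + e := by ring
    omega
  -- the triangle as a biUnion
  set Tri : Finset (ℕ × ℕ) :=
    (range (J + 1)).biUnion (fun j => (range (D - e * j)).image (fun i => (i, j))) with hTri
  have hTriCard : Tri.card = ∑ j ∈ range (J + 1), (D - e * j) := by
    rw [hTri, Finset.card_biUnion]
    · refine Finset.sum_congr rfl fun j _ => ?_
      rw [Finset.card_image_of_injective _ (fun a b hab => by simpa using hab),
        Finset.card_range]
    · intro j1 _ j2 _ hne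
      simp only [Function.onFun]; rw [Finset.disjoint_left]
      intro p hp1 hp2
      simp only [Finset.mem_image, Finset.mem_range] at hp1 hp2
      obtain ⟨i1, _, rfl⟩ := hp1
      obtain ⟨i2, _, h2⟩ := hp2
      exact hne (by simpa using (congrArg Prod.snd h2).symm)
  have hTriSub : Tri ⊆ ((range D) ×ˢ (range D)).filter (fun p : ℕ × ℕ => p.1 + e * p.2 < D) := by
    intro p hp
    simp only [hTri, Finset.mem_biUnion, Finset.mem_image, Finset.mem_range] at hp
    obtain ⟨j, hj, i, hi, rfl⟩ := hp
    have hej : e * j ≤ e * J := Nat.mul_le_mul_left e (by omega)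
    simp only [Finset.mem_filter, Finset.mem_product, Finset.mem_range]
    have hjD : j < D := by
      have : j ≤ e * j := Nat.le_mul_of_pos_left j he
      omega
    refine ⟨⟨by omega, hjD⟩, by omega⟩
  -- the integer computation
  have hgauss : ((∑ j ∈ range (J + 1), j) : ℕ) * 2 = (J + 1) * J := by
    rw [Finset.sum_range_id_mul_two]; simp
  have hcast : ((∑ j ∈ range (J + 1), (D - e * j) : ℕ) : ℤ) =
      ∑ j ∈ range (J + 1), ((D : ℤ) - e * j) := by
    rw [Nat.cast_sum]
    refine Finset.sum_congr rfl fun j hj => ?_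
    simp only [Finset.mem_range] at hj
    have : e * j ≤ e * J := Nat.mul_le_mul_left e (by omega)
    have hle : e * j ≤ D := by omega
    push_cast [Nat.cast_sub hle]
    ring
  have h2S : 2 * (∑ j ∈ range (J + 1), ((D : ℤ) - e * j)) =
      ((J : ℤ) + 1) * (2 * D - e * J) := by
    rw [Finset.sum_sub_distrib, Finset.sum_const, Finset.card_range, ← Finset.mul_sum]
    have hg : ((∑ j ∈ range (J + 1), j : ℕ) : ℤ) * 2 = ((J : ℤ) + 1) * J := by
      exact_mod_cast congrArg (Nat.cast : ℕ → ℤ) hgauss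
    push_cast [nsmul_eq_mul] at hg ⊢
    linear_combination (-(e : ℤ)) * hg
  have hkey : (D : ℤ) * (D + 1) ≤ 2 * e * ((∑ j ∈ range (J + 1), (D - e * j) : ℕ) : ℤ) := by
    rw [hcast]
    have heJ' : (e : ℤ) * J ≤ (D : ℤ) - 1 := by
      have := heJ
      have h1 : ((e * J : ℕ) : ℤ) ≤ ((D - 1 : ℕ) : ℤ) := by exact_mod_cast this
      push_cast [Nat.cast_sub hD1] at h1
      linarith
    have heJ1' : (D : ℤ) ≤ (e : ℤ) * (J + 1) := by exact_mod_cast heJ1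
    have hDz : (1 : ℤ) ≤ D := by exact_mod_cast hD1
    nlinarith [h2S, heJ', heJ1', hDz]
  have : (D : ℤ) * (D + 1) ≤ 2 * e * (Tri.card : ℤ) := by rw [hTriCard]; exact hkey
  have hfin : (D : ℤ) * (D + 1) ≤
      2 * e * ((((range D) ×ˢ (range D)).filter
        (fun p : ℕ × ℕ => p.1 + e * p.2 < D)).card : ℤ) := by
    have hc : (Tri.card : ℤ) ≤ _ := Int.ofNat_le.mpr (Finset.card_le_card hTriSub)
    nlinarith [this, hc]
  exact_mod_cast hfin

lemma johnson_key (q δ τ γ : ℝ) (hq2 : 2 ≤ q) (hδpos : 0 < δ)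
    (hτ : τ = (q - 1) / q * (1 - Real.sqrt (1 - q * δ / (q - 1))))
    (hγ0 : 0 ≤ γ) (hγτ : γ < τ) :
    1 - δ < (1 - γ) ^ 2 + γ ^ 2 / (q - 1) := by
  have hq1 : (0:ℝ) < q - 1 := by linarith
  have hq0 : (0:ℝ) < q := by linarith
  set θ := 1 - q * δ / (q - 1) with hθdef
  set w := Real.sqrt θ with hwdef
  have hw0 : 0 ≤ w := Real.sqrt_nonneg θ
  have hθw : θ ≤ w ^ 2 := by
    rcases le_or_gt 0 θ with h | h
    · rw [hwdef, Real.sq_sqrt h]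
    · nlinarith [sq_nonneg w]
  have hτq : τ * q = (q - 1) * (1 - w) := by
    rw [hτ]; field_simp
  have hγq : γ * q < (q - 1) * (1 - w) := by
    rw [← hτq]
    exact mul_lt_mul_of_pos_right hγτ hq0
  have hθ' : (q - 1) * θ = (q - 1) - q * δ := by
    rw [hθdef]; field_simp
  have hE : (1 - γ) ^ 2 + γ ^ 2 / (q - 1) = ((q - 1) * (1 - γ) ^ 2 + γ ^ 2) / (q - 1) := by
    field_simp
  rw [hE, lt_div_iff₀ hq1]
  have h2 : 0 < ((q - 1) * (1 + w) - q * γ) * ((q - 1) * (1 - w) - q * γ) :=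
    mul_pos (by nlinarith) (by nlinarith)
  have hθ'' : (q - 1) - q * δ ≤ (q - 1) * w ^ 2 := by nlinarith [hθw, hq1]
  nlinarith [h2, hθ'', hq1, hq0, mul_le_mul_of_nonneg_left hθ'' (le_of_lt hq1)]

/-- Core linear algebra: fewer constraints than monomials gives a nonzero solution. -/
lemma exists_interp (K : Type*) [Field K] (Mon : Finset (ℕ × ℕ)) (ι : Type*) [Fintype ι]
    (pt : ι → K × K) (uv : ι → ℕ × ℕ) (hcard : Fintype.card ι < Mon.card) :
    ∃ Q : Polynomial (Polynomial K), Q ≠ 0 ∧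
      (∀ t : ι, ((shiftXY Q (pt t).1 (pt t).2).coeff (uv t).2).coeff (uv t).1 = 0) ∧
      (∀ i j : ℕ, (Q.coeff j).coeff i ≠ 0 → (i, j) ∈ Mon) := by
  classical
  set tp : (↥Mon → K) → Polynomial (Polynomial K) := fun c =>
    ∑ p ∈ Mon.attach, Polynomial.monomial p.1.2 (Polynomial.monomial p.1.1 (c p)) with htp
  have hcoeff : ∀ (c : ↥Mon → K) (i j : ℕ),
      ((tp c).coeff j).coeff i = if h : (i, j) ∈ Mon then c ⟨(i, j), h⟩ else 0 := by
    intro c i j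
    rw [htp]
    simp only [Polynomial.finset_sum_coeff, Polynomial.coeff_monomial,
      apply_ite (fun r : Polynomial K => r.coeff i), Polynomial.coeff_zero]
    by_cases h : (i, j) ∈ Mon
    · rw [dif_pos h]
      rw [Finset.sum_eq_single_of_mem (⟨(i, j), h⟩ : ↥Mon) (Finset.mem_attach _ _)]
      · simp
      · intro b _ hb
        split_ifs with h1 h2
        · exact absurd (Subtype.ext (Prod.ext h2 h1)) hb
        · rfl
        · rfl
    · rw [dif_neg h]
      apply Finset.sum_eq_zero
      intro b _
      split_ifs with h1 h2
      · exact absurd (by rw [← h2, ← h1]; exact b.2) h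
      · rfl
      · rfl
  have htp_add : ∀ c c' : ↥Mon → K, tp (c + c') = tp c + tp c' := by
    intro c c'
    rw [htp, ← Finset.sum_add_distrib]
    exact Finset.sum_congr rfl fun p _ => by simp [map_add]
  have htp_smul : ∀ (r : K) (c : ↥Mon → K), tp (r • c) = Polynomial.C (Polynomial.C r) * tp c := by
    intro r c
    rw [htp, Finset.mul_sum]
    exact Finset.sum_congr rfl fun p _ => by
      simp [Polynomial.C_mul_monomial, smul_eq_mul]
  set φ : (↥Mon → K) →ₗ[K] (ι → K) :=
    { toFun := fun c t => ((shiftXY (tp c) (pt t).1 (pt t).2).coeff (uv t).2).coeff (uv t).1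
      map_add' := by
        intro c c'
        funext t
        simp only [htp_add, shiftXY_add, Polynomial.coeff_add, Pi.add_apply]
      map_smul' := by
        intro r c
        funext t
        simp only [htp_smul, shiftXY_C_mul, Polynomial.coeff_C_mul, RingHom.id_apply,
          Pi.smul_apply, smul_eq_mul] } with hφ
  have hninj : ¬ Function.Injective φ := by
    intro hinj
    have hle := LinearMap.finrank_le_finrank_of_injective hinj
    rw [Module.finrank_fintype_fun_eq_card, Module.finrank_fintype_fun_eq_card,
      Fintype.card_coe] at hle
    omega
  obtain ⟨c1, c2, hceq, hcne⟩ := Function.not_injective_iff.mp hninj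
  set c0 : ↥Mon → K := c1 - c2 with hc0
  have hc0ne : c0 ≠ 0 := sub_ne_zero.mpr hcne
  have hφ0 : φ c0 = 0 := by rw [hc0, map_sub, hceq, sub_self]
  refine ⟨tp c0, ?_, ?_, ?_⟩
  · obtain ⟨p, hp⟩ := Function.ne_iff.mp hc0ne
    intro h0
    apply hp
    have := hcoeff c0 p.1.1 p.1.2
    rw [h0] at this
    simp only [Polynomial.coeff_zero] at this
    rw [dif_pos (by simpa using p.2)] at this
    simpa using this.symm
  · intro t
    have := congrFun hφ0 t
    simpa [hφ] using this
  · intro i j hne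
    by_contra hmem
    exact hne (by rw [hcoeff c0 i j, dif_neg hmem])

lemma crux (q k n E a b s : ℝ)
    (hq1 : 0 < q - 1) (hk0 : 0 ≤ k - 1) (hn0 : 0 < n)
    (hEab : a ^ 2 + (q - 1) * b ^ 2 = E)
    (hkE : k - 1 < n * E) (hs1 : 1 ≤ s)
    (hc0s : 3 * (k - 1) * n * (a + (q - 1) * b) + 2 * (k - 1) * n * q + 1
      ≤ (n * E * (n * E - (k - 1))) * s) :
    (k - 1) * (n * ((s * a + 1) * (s * a + 2) + (q - 1) * ((s * b + 1) * (s * b + 2))))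
      < (s * n * E) ^ 2 := by
  have hs0 : (0:ℝ) ≤ s := by linarith
  have hexp : (k - 1) * (n * ((s * a + 1) * (s * a + 2) + (q - 1) * ((s * b + 1) * (s * b + 2))))
      = (k - 1) * n * E * s ^ 2 + (3 * (k - 1) * n * (a + (q - 1) * b)) * s
        + 2 * (k - 1) * n * q := by
    rw [← hEab]; ring
  have h1 : (3 * (k - 1) * n * (a + (q - 1) * b) + 2 * (k - 1) * n * q + 1) * s
      ≤ ((n * E * (n * E - (k - 1))) * s) * s :=
    mul_le_mul_of_nonneg_right hc0s hs0
  have hC2 : 0 ≤ 2 * (k - 1) * n * q := by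
    have := mul_nonneg (mul_nonneg (by linarith : (0:ℝ) ≤ 2 * (k - 1)) hn0.le)
      (by linarith : (0:ℝ) ≤ q)
    linarith [this]
  have h3 : 0 ≤ (2 * (k - 1) * n * q + 1) * (s - 1) :=
    mul_nonneg (by linarith) (by linarith)
  rw [hexp]
  nlinarith [h1, h3]

set_option maxHeartbeats 2000000 in
/-- Existence of the interpolation polynomial: for every relative radius `γ` below the
`q`-ary Johnson radius `τ` there is an `s₀` such that for all multiplicities `s ≥ s₀` and
every received word `y`, a nonzero polynomial `Q(X,Y)` satisfying the interpolation
conditions with varying multiplicities and the weighted-degree condition exists. -/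
theorem interpolation_polynomial_exists
    (q m n k : ℕ) (hq : IsPrimePow q) (hm : 2 ≤ m)
    (Fq K : Type*) [Field Fq] [Fintype Fq] [Field K] [Fintype K] [Algebra Fq K]
    (hcardq : Fintype.card Fq = q) (hcardK : Fintype.card K = q ^ m)
    (α : Fin n → K) (hα : Function.Injective α)
    (β : Fin n → K) (hβ : ∀ i, β i ≠ 0)
    (hk1 : 1 < k) (hkn : k ≤ n)
    (δ τ : ℝ) (hδ : δ = ((n : ℝ) - k + 1) / n)
    (hτ : τ = ((q : ℝ) - 1) / q * (1 - Real.sqrt (1 - q * δ / ((q : ℝ) - 1)))) :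
    ∀ γ : ℝ, 0 ≤ γ → γ < τ →
      ∃ s₀ : ℕ, ∀ s : ℕ, s₀ ≤ s → ∀ y : Fin n → Fq,
        ∃ Q : Polynomial (Polynomial K), Q ≠ 0 ∧
          (∀ i, HasMultAtLeast Q (α i) (algebraMap Fq K (y i) * (β i)⁻¹)
            ⌈(s : ℝ) * (1 - γ)⌉₊) ∧
          (∀ i, ∀ z : Fq, z ≠ y i →
            HasMultAtLeast Q (α i) (algebraMap Fq K z * (β i)⁻¹)
              ⌈(s : ℝ) * γ / ((q : ℝ) - 1)⌉₊) ∧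
          (∀ i j : ℕ, (Q.coeff j).coeff i ≠ 0 →
            (i : ℝ) + ((k : ℝ) - 1) * j <
              (s : ℝ) * n * ((1 - γ) ^ 2 + γ ^ 2 / ((q : ℝ) - 1))) := by
  classical
  intro γ hγ0 hγτ
  have hq2 : 2 ≤ q := hq.two_le
  have hq2' : (2:ℝ) ≤ (q:ℝ) := by exact_mod_cast hq2
  have hq1' : (0:ℝ) < (q:ℝ) - 1 := by linarith
  have hkn' : (k:ℝ) ≤ (n:ℝ) := by exact_mod_cast hkn
  have hk2' : (2:ℝ) ≤ (k:ℝ) := by exact_mod_cast hk1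
  have hn0 : (0:ℝ) < (n:ℝ) := by linarith
  have hδpos : 0 < δ := by rw [hδ]; exact div_pos (by linarith) hn0
  have hkey := johnson_key (q:ℝ) δ τ γ hq2' hδpos hτ hγ0 hγτ
  -- γ < 1
  have hγ1 : γ < 1 := by
    have hw0 : 0 ≤ Real.sqrt (1 - q * δ / ((q:ℝ) - 1)) := Real.sqrt_nonneg _
    have hd0 : (0:ℝ) ≤ ((q:ℝ) - 1) / q := div_nonneg (by linarith) (by linarith)
    have hτle : τ ≤ ((q:ℝ) - 1) / q := by
      rw [hτ]
      nlinarith [mul_le_mul_of_nonneg_left (by linarith :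
        1 - Real.sqrt (1 - q * δ / ((q:ℝ) - 1)) ≤ 1) hd0]
    have : ((q:ℝ) - 1) / q < 1 := by
      rw [div_lt_one (by linarith : (0:ℝ) < (q:ℝ))]; linarith
    linarith
  set E : ℝ := (1 - γ) ^ 2 + γ ^ 2 / ((q:ℝ) - 1) with hEdef
  have hkeyE : 1 - δ < E := hkey
  have h1δ : 1 - δ = ((k:ℝ) - 1) / n := by rw [hδ]; field_simp; ring
  have hEk : ((k:ℝ) - 1) / n < E := by rw [← h1δ]; exact hkeyE
  have hcE : (k:ℝ) - 1 < (n:ℝ) * E := by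
    have := (div_lt_iff₀ hn0).mp hEk; linarith
  have hE0 : 0 < E := lt_trans (div_pos (by linarith) hn0) hEk
  have hc0pos : 0 < (n:ℝ) * E * ((n:ℝ) * E - ((k:ℝ) - 1)) :=
    mul_pos (mul_pos hn0 hE0) (by linarith)
  have hEab : (1 - γ) ^ 2 + ((q:ℝ) - 1) * (γ / ((q:ℝ) - 1)) ^ 2 = E := by
    rw [hEdef]; field_simp
  refine ⟨max 1 ⌈(3 * ((k:ℝ) - 1) * n * ((1 - γ) + ((q:ℝ) - 1) * (γ / ((q:ℝ) - 1)))
      + 2 * ((k:ℝ) - 1) * n * q + 1) / ((n:ℝ) * E * ((n:ℝ) * E - ((k:ℝ) - 1)))⌉₊, ?_⟩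
  intro s hs y
  have hs1 : 1 ≤ s := le_trans (le_max_left _ _) hs
  have hsR : (1:ℝ) ≤ (s:ℝ) := by exact_mod_cast hs1
  have hceil := le_trans (le_max_right _ _) hs
  have hdivle : (3 * ((k:ℝ) - 1) * n * ((1 - γ) + ((q:ℝ) - 1) * (γ / ((q:ℝ) - 1)))
      + 2 * ((k:ℝ) - 1) * n * q + 1) / ((n:ℝ) * E * ((n:ℝ) * E - ((k:ℝ) - 1))) ≤ (s:ℝ) :=
    Nat.ceil_le.mp hceil
  have hc0s : 3 * ((k:ℝ) - 1) * n * ((1 - γ) + ((q:ℝ) - 1) * (γ / ((q:ℝ) - 1)))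
      + 2 * ((k:ℝ) - 1) * n * q + 1
      ≤ ((n:ℝ) * E * ((n:ℝ) * E - ((k:ℝ) - 1))) * s := by
    rw [div_le_iff₀ hc0pos] at hdivle; linarith
  set A : ℕ := ⌈(s : ℝ) * (1 - γ)⌉₊ with hAdef
  set B : ℕ := ⌈(s : ℝ) * γ / ((q : ℝ) - 1)⌉₊ with hBdef
  set D : ℕ := ⌈(s : ℝ) * n * E⌉₊ with hDdef
  have hsnE0 : (0:ℝ) ≤ (s:ℝ) * n * E :=
    mul_nonneg (mul_nonneg (by linarith) hn0.le) hE0.le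
  have hAle : (A:ℝ) ≤ (s:ℝ) * (1 - γ) + 1 :=
    (Nat.ceil_lt_add_one (mul_nonneg (by linarith) (by linarith))).le
  have hBle : (B:ℝ) ≤ (s:ℝ) * (γ / ((q:ℝ) - 1)) + 1 := by
    have h0 : (0:ℝ) ≤ (s:ℝ) * γ / ((q:ℝ) - 1) :=
      div_nonneg (mul_nonneg (by linarith) hγ0) hq1'.le
    exact (Nat.ceil_lt_add_one h0).le.trans_eq (by rw [mul_div_assoc])
  have hD1 : (s:ℝ) * n * E ≤ (D:ℝ) := Nat.le_ceil _
  -- the multiplicity function and constraint set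
  set r : Fin n × Fq → ℕ := fun iz => if iz.2 = y iz.1 then A else B with hrdef
  set T : Finset ((_ : Fin n × Fq) × ℕ × ℕ) :=
    Finset.univ.sigma (fun iz =>
      ((Finset.range (r iz)) ×ˢ (Finset.range (r iz))).filter
        (fun uv : ℕ × ℕ => uv.1 + uv.2 < r iz)) with hTdef
  set Mon : Finset (ℕ × ℕ) :=
    ((Finset.range D) ×ˢ (Finset.range D)).filter
      (fun p : ℕ × ℕ => p.1 + (k - 1) * p.2 < D) with hMondef
  -- counting
  have hT2 : T.card * 2 ≤ ∑ iz : Fin n × Fq, r iz * (r iz + 1) := by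
    rw [hTdef, Finset.card_sigma, Finset.sum_mul]
    exact Finset.sum_le_sum fun iz _ => tri_card_le (r iz)
  have hsum : ∑ iz : Fin n × Fq, r iz * (r iz + 1)
      = n * (A * (A + 1) + (q - 1) * (B * (B + 1))) := by
    rw [Fintype.sum_prod_type]
    have hinner : ∀ i : Fin n,
        (∑ z : Fq, r (i, z) * (r (i, z) + 1)) = A * (A + 1) + (q - 1) * (B * (B + 1)) := by
      intro i
      rw [← Finset.add_sum_erase _ _ (Finset.mem_univ (y i))]
      have h1 : r (i, y i) = A := by rw [hrdef]; simp
      have h2 : ∑ z ∈ Finset.univ.erase (y i), r (i, z) * (r (i, z) + 1)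
          = (q - 1) * (B * (B + 1)) := by
        rw [Finset.sum_congr rfl (fun z hz => ?_), Finset.sum_const,
          Finset.card_erase_of_mem (Finset.mem_univ _), Finset.card_univ, hcardq,
          smul_eq_mul]
        have hzne : z ≠ y i := Finset.ne_of_mem_erase hz
        rw [hrdef]; simp [hzne]
      rw [h1, h2]
    rw [Finset.sum_congr rfl (fun i _ => hinner i), Finset.sum_const, Finset.card_univ,
      Fintype.card_fin, smul_eq_mul]
  have hT2' : T.card * 2 ≤ n * (A * (A + 1) + (q - 1) * (B * (B + 1))) := by
    rw [← hsum]; exact hT2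
  have hMon2 : D * (D + 1) ≤ 2 * (k - 1) * Mon.card := mon_card_ge (k - 1) D (by omega)
  -- the real inequality
  have hcrux := crux (q:ℝ) (k:ℝ) (n:ℝ) E (1 - γ) (γ / ((q:ℝ) - 1)) (s:ℝ)
    hq1' (by linarith) hn0 hEab hcE hsR hc0s
  have hA0 : (0:ℝ) ≤ (A:ℝ) := Nat.cast_nonneg A
  have hB0 : (0:ℝ) ≤ (B:ℝ) := Nat.cast_nonneg B
  have hsa0 : (0:ℝ) ≤ (s:ℝ) * (1 - γ) := mul_nonneg (by linarith) (by linarith)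
  have hsb0 : (0:ℝ) ≤ (s:ℝ) * (γ / ((q:ℝ) - 1)) :=
    mul_nonneg (by linarith) (div_nonneg hγ0 hq1'.le)
  have e1 : (A:ℝ) * ((A:ℝ) + 1) ≤ ((s:ℝ) * (1 - γ) + 1) * ((s:ℝ) * (1 - γ) + 2) :=
    mul_le_mul hAle (by linarith) (by linarith) (by linarith)
  have e2 : (B:ℝ) * ((B:ℝ) + 1)
      ≤ ((s:ℝ) * (γ / ((q:ℝ) - 1)) + 1) * ((s:ℝ) * (γ / ((q:ℝ) - 1)) + 2) :=
    mul_le_mul hBle (by linarith) (by linarith) (by linarith)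
  have e3 : (A:ℝ) * ((A:ℝ) + 1) + ((q:ℝ) - 1) * ((B:ℝ) * ((B:ℝ) + 1))
      ≤ ((s:ℝ) * (1 - γ) + 1) * ((s:ℝ) * (1 - γ) + 2)
        + ((q:ℝ) - 1) * (((s:ℝ) * (γ / ((q:ℝ) - 1)) + 1) * ((s:ℝ) * (γ / ((q:ℝ) - 1)) + 2)) :=
    add_le_add e1 (mul_le_mul_of_nonneg_left e2 (by linarith))
  have hRmid : ((k:ℝ) - 1) * ((n:ℝ) * ((A:ℝ) * ((A:ℝ) + 1)
      + ((q:ℝ) - 1) * ((B:ℝ) * ((B:ℝ) + 1)))) < (D:ℝ) * ((D:ℝ) + 1) := by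
    calc ((k:ℝ) - 1) * ((n:ℝ) * ((A:ℝ) * ((A:ℝ) + 1) + ((q:ℝ) - 1) * ((B:ℝ) * ((B:ℝ) + 1))))
        ≤ ((k:ℝ) - 1) * ((n:ℝ) * (((s:ℝ) * (1 - γ) + 1) * ((s:ℝ) * (1 - γ) + 2)
          + ((q:ℝ) - 1) * (((s:ℝ) * (γ / ((q:ℝ) - 1)) + 1)
            * ((s:ℝ) * (γ / ((q:ℝ) - 1)) + 2)))) :=
          mul_le_mul_of_nonneg_left (mul_le_mul_of_nonneg_left e3 hn0.le) (by linarith)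
      _ < ((s:ℝ) * n * E) ^ 2 := hcrux
      _ ≤ (D:ℝ) * ((D:ℝ) + 1) := by nlinarith [hD1, hsnE0]
  have hmidN : (k - 1) * (n * (A * (A + 1) + (q - 1) * (B * (B + 1)))) < D * (D + 1) := by
    have hcast : (((k - 1) * (n * (A * (A + 1) + (q - 1) * (B * (B + 1)))) : ℕ) : ℝ)
        < ((D * (D + 1) : ℕ) : ℝ) := by
      push_cast [Nat.cast_sub (show 1 ≤ k by omega), Nat.cast_sub (show 1 ≤ q by omega)]
      convert hRmid using 1 <;> ring
    exact_mod_cast hcast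
  have hcard : Fintype.card ↥T < Mon.card := by
    rw [Fintype.card_coe]
    have hchain : 2 * (k - 1) * T.card < 2 * (k - 1) * Mon.card :=
      calc 2 * (k - 1) * T.card = (k - 1) * (T.card * 2) := by ring
        _ ≤ (k - 1) * (n * (A * (A + 1) + (q - 1) * (B * (B + 1)))) :=
            Nat.mul_le_mul_left _ hT2'
        _ < D * (D + 1) := hmidN
        _ ≤ 2 * (k - 1) * Mon.card := hMon2
    exact Nat.lt_of_mul_lt_mul_left hchain
  obtain ⟨Q, hQ0, hQc, hQm⟩ := exists_interp K Mon ↥T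
    (fun t => (α t.1.1.1, algebraMap Fq K t.1.1.2 * (β t.1.1.1)⁻¹))
    (fun t => t.1.2) hcard
  refine ⟨Q, hQ0, ?_, ?_, ?_⟩
  · intro i u v huv
    have hmem : (⟨(i, y i), (u, v)⟩ : (_ : Fin n × Fq) × ℕ × ℕ) ∈ T := by
      rw [hTdef]
      simp only [Finset.mem_sigma, Finset.mem_univ, Finset.mem_filter, Finset.mem_product,
        Finset.mem_range, true_and]
      have hr : r (i, y i) = A := by rw [hrdef]; simp
      rw [hr]
      omega
    exact hQc ⟨⟨(i, y i), (u, v)⟩, hmem⟩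
  · intro i z hz u v huv
    have hmem : (⟨(i, z), (u, v)⟩ : (_ : Fin n × Fq) × ℕ × ℕ) ∈ T := by
      rw [hTdef]
      simp only [Finset.mem_sigma, Finset.mem_univ, Finset.mem_filter, Finset.mem_product,
        Finset.mem_range, true_and]
      have hr : r (i, z) = B := by rw [hrdef]; simp [hz]
      rw [hr]
      omega
    exact hQc ⟨⟨(i, z), (u, v)⟩, hmem⟩
  · intro i j hne
    have hmem := hQm i j hne
    rw [hMondef, Finset.mem_filter, Finset.mem_product] at hmem
    have hlt : i + (k - 1) * j < D := hmem.2
    have h1 : ((i + (k - 1) * j + 1 : ℕ) : ℝ) ≤ (D:ℝ) := by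
      exact_mod_cast Nat.succ_le_of_lt hlt
    have h1' : (i:ℝ) + ((k:ℝ) - 1) * j + 1 ≤ (D:ℝ) := by
      push_cast [Nat.cast_sub (show 1 ≤ k by omega)] at h1
      linarith
    have h2 : (D:ℝ) < (s:ℝ) * n * E + 1 := Nat.ceil_lt_add_one hsnE0
    linarith
end

section
/- Let q ≥ 2 be an integer and let δ be a real number with 0 < δ < (q−1)/q. Set τ := ((q−1)/q)·(1 − √(1 − qδ/(q−1))). Then for every real γ with 0 ≤ γ < τ, one has (1−γ)(1−τ) + γ·τ/(q−1) > √((1−δ)·((1−τ)² + τ²/(q−1))). -/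
/-- The soft-decoding condition: for the `q`-ary Johnson radius `τ` associated to
`δ ∈ (0, (q-1)/q)` and any `0 ≤ γ < τ`, one has
`(1-γ)(1-τ) + γτ/(q-1) > √((1-δ)((1-τ)² + τ²/(q-1)))`. -/
theorem soft_decoding_condition (q : ℕ) (hq : 2 ≤ q) (δ : ℝ)
    (hδ0 : 0 < δ) (hδ1 : δ < ((q : ℝ) - 1) / q)
    (τ : ℝ) (hτ : τ = ((q : ℝ) - 1) / q * (1 - Real.sqrt (1 - q * δ / ((q : ℝ) - 1)))) :
    ∀ γ : ℝ, 0 ≤ γ → γ < τ →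
      (1 - γ) * (1 - τ) + γ * τ / ((q : ℝ) - 1) >
        Real.sqrt ((1 - δ) * ((1 - τ) ^ 2 + τ ^ 2 / ((q : ℝ) - 1))) := by
  intro γ hγ0 hγτ
  have hq2 : (2:ℝ) ≤ (q:ℝ) := by exact_mod_cast hq
  have hQ : (0:ℝ) < (q:ℝ) - 1 := by linarith
  have hqpos : (0:ℝ) < (q:ℝ) := by linarith
  have harg : 0 < 1 - (q:ℝ) * δ / ((q:ℝ) - 1) := by
    rw [sub_pos, div_lt_one hQ]
    nlinarith [(lt_div_iff₀ hqpos).mp hδ1]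
  set s := Real.sqrt (1 - (q:ℝ) * δ / ((q:ℝ) - 1)) with hsdef
  have hs2 : s ^ 2 = 1 - (q:ℝ) * δ / ((q:ℝ) - 1) := Real.sq_sqrt harg.le
  have hspos : 0 < s := Real.sqrt_pos.mpr harg
  have hdpos : 0 < (q:ℝ) * δ / ((q:ℝ) - 1) := by positivity
  have hδeq : δ = ((q:ℝ) - 1) / q * (1 - s ^ 2) := by
    have h := hs2
    field_simp at h ⊢
    linarith
  set A := (1 + ((q:ℝ) - 1) * s ^ 2) / q with hA
  have hApos : 0 < A := by positivity
  have h1 : 1 - δ = A := by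
    rw [hδeq, hA]; field_simp; ring
  have h2 : (1 - τ) ^ 2 + τ ^ 2 / ((q:ℝ) - 1) = A := by
    rw [hτ, hA]; field_simp; ring
  have hrhs : Real.sqrt ((1 - δ) * ((1 - τ) ^ 2 + τ ^ 2 / ((q:ℝ) - 1))) = A := by
    rw [h1, h2, Real.sqrt_mul_self hApos.le]
  rw [hrhs]
  -- τ < (q-1)/q, so the linear function of γ is strictly decreasing
  have hτub : τ * q < (q:ℝ) - 1 := by
    rw [hτ]
    have : (1 - s) < 1 := by linarith
    calc ((q:ℝ) - 1) / q * (1 - s) * q = ((q:ℝ) - 1) * (1 - s) := by field_simp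
    _ < ((q:ℝ) - 1) * 1 := by nlinarith
    _ = (q:ℝ) - 1 := by ring
  have hcoef : 0 < (1 - τ) - τ / ((q:ℝ) - 1) := by
    rw [sub_pos, div_lt_iff₀ hQ]
    nlinarith
  have key : (1 - γ) * (1 - τ) + γ * τ / ((q:ℝ) - 1)
      = A + (τ - γ) * ((1 - τ) - τ / ((q:ℝ) - 1)) := by
    rw [← h2]; field_simp; ring
  rw [key]
  have := mul_pos (sub_pos.mpr hγτ) hcoef
  linarith
end
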